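/- Angular eigenvalue estimate in the upper half-plane (Proposition 2.1, statement 1(b)): Fix s ∈ ℝ, m ∈ ℝ, ν ∈ ℂ with Im ν > 0, and λ ∈ ℂ. Suppose S : (0, π) → ℂ is a twice continuously differentiable solution of the angular Teukolsky ODE with spin s which is not identically zero and satisfies: ∫₀^π |S|² sin θ dθ < ∞, ∫₀^π |S′|² sin θ dθ < ∞, ∫₀^π (m + s cos θ)² |S|² / sin θ dθ < ∞, and sin θ · S′(θ) · conj(S(θ)) → 0 as θ → 0⁺ and as θ → π⁻. Then Im(conj(ν) · λ) < 0. -/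

import Mathlib

/-!
Multiply the equation by `sin θ · conj S` and integrate over `(0, π)`. The second-order term
integrates by parts against the flux `sin θ · S' · conj S`, which vanishes at both ends, so
`∫ |S'|² sin + (m + s cos)² |S|² / sin + (-ν² cos² + 2νs cos - λ) |S|² sin = 0`.
Multiplying by `conj ν` makes `2 |ν|² s cos θ` real, and the imaginary part reads
`Im ν · ∫ E + Im (conj ν · λ) · ∫ |S|² sin = 0` with
`E = |S'|² sin + (m + s cos)² |S|² / sin + |ν|² cos² |S|² sin ≥ 0`.
Since `S` is continuous and not identically zero, `∫ E > 0`, which forces `Im (conj ν · λ) < 0`.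
-/

open Real Complex Filter Set MeasureTheory

noncomputable section

/-- The angular Teukolsky ODE with spin `s`:
`−(1/sin θ)(d/dθ)(sin θ dS/dθ) + [(m + s cos θ)²/sin²θ − ν² cos²θ + 2νs cos θ] S = λ S`
on `(0, π)`. -/
def AngularTeukolskyODE (s m : ℝ) (ν lam : ℂ) (S : ℝ → ℂ) : Prop :=
  ∀ θ : ℝ, 0 < θ → θ < π →
    -(1 / (Real.sin θ : ℂ)) * deriv (fun θ' : ℝ => (Real.sin θ' : ℂ) * deriv S θ') θ
      + ((((m + s * Real.cos θ) ^ 2 / Real.sin θ ^ 2 : ℝ) : ℂ)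
          - ν ^ 2 * (Real.cos θ : ℂ) ^ 2 + 2 * ν * (s : ℂ) * (Real.cos θ : ℂ)) * S θ
      = lam * S θ

open scoped ComplexConjugate Topology

theorem setIntegral_pos_of_continuousOn {X : Type*} [TopologicalSpace X] [MeasurableSpace X]
    [OpensMeasurableSpace X] {μ : Measure X} [μ.IsOpenPosMeasure] {f : X → ℝ} {U : Set X}
    {x : X} (hU : IsOpen U) (hf : ContinuousOn f U) (hfi : IntegrableOn f U μ)
    (hf_nonneg : ∀ y ∈ U, 0 ≤ f y) (hx : x ∈ U) (hfx : f x ≠ 0) :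
    0 < ∫ y in U, f y ∂μ := by
  rw [setIntegral_pos_iff_support_of_nonneg_ae
    (ae_restrict_of_forall_mem hU.measurableSet hf_nonneg) hfi]
  have hV : IsOpen (U ∩ f ⁻¹' {0}ᶜ) := hf.isOpen_inter_preimage hU isOpen_compl_singleton
  refine (hV.measure_pos μ ⟨x, hx, hfx⟩).trans_le (measure_mono ?_)
  rintro y ⟨hyU, hy⟩
  exact ⟨hy, hyU⟩

theorem integral_Ioo_eq_sub_of_hasDerivAt_of_tendsto {E : Type*} [NormedAddCommGroup E]
    [NormedSpace ℝ E] [CompleteSpace E] {f f' : ℝ → E} {a b : ℝ} {fa fb : E} (hab : a < b)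
    (hderiv : ∀ x ∈ Ioo a b, HasDerivAt f (f' x) x) (hint : IntegrableOn f' (Ioo a b))
    (ha : Tendsto f (𝓝[>] a) (𝓝 fa)) (hb : Tendsto f (𝓝[<] b) (𝓝 fb)) :
    ∫ x in Ioo a b, f' x = fb - fa := by
  rw [← integral_Ioc_eq_integral_Ioo, ← intervalIntegral.integral_of_le hab.le]
  exact intervalIntegral.integral_eq_sub_of_hasDerivAt_of_tendsto hab hderiv
    ((intervalIntegrable_iff_integrableOn_Ioo_of_le hab.le).2 hint) ha hb

theorem exists_mem_Ioo_ne_zero_and_cos_ne_zero {E : Type*} [TopologicalSpace E] [T1Space E]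
    [Zero E] {S : ℝ → E} (hS : ContinuousOn S (Ioo 0 π)) (hne : ∃ θ ∈ Ioo 0 π, S θ ≠ 0) :
    ∃ θ ∈ Ioo 0 π, S θ ≠ 0 ∧ Real.cos θ ≠ 0 := by
  obtain ⟨θ₀, hθ₀, hSθ₀⟩ := hne
  have hU : IsOpen (Ioo 0 π ∩ S ⁻¹' {0}ᶜ) :=
    hS.isOpen_inter_preimage isOpen_Ioo isOpen_compl_singleton
  obtain ⟨θ, ⟨hθ, hSθ⟩, hθ_ne⟩ :=
    (dense_compl_singleton (π / 2)).inter_open_nonempty _ hU ⟨θ₀, hθ₀, hSθ₀⟩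
  refine ⟨θ, hθ, hSθ, fun hcos => hθ_ne ?_⟩
  refine injOn_cos (Ioo_subset_Icc_self hθ) ⟨by positivity, by linarith [pi_pos]⟩ ?_
  rw [hcos, Real.cos_pi_div_two]

theorem ContinuousOn.integrableOn_Ioo_mul {R : Type*} [NormedRing R] {g f : ℝ → R} {a b : ℝ}
    (hg : ContinuousOn g (Icc a b)) (hf : IntegrableOn f (Ioo a b)) : IntegrableOn (fun x => g x * f x) (Ioo a b) :=
  IntegrableOn.continuousOn_mul_of_subset hg hf isCompact_Icc measurableSet_Ioo
    Ioo_subset_Icc_self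

namespace AngularTeukolskyODE

variable {s m : ℝ} {ν lam : ℂ} {S : ℝ → ℂ}

def potential (s m : ℝ) (ν : ℂ) (θ : ℝ) : ℂ :=
  (((m + s * Real.cos θ) ^ 2 / Real.sin θ ^ 2 : ℝ) : ℂ)
    - ν ^ 2 * (Real.cos θ : ℂ) ^ 2 + 2 * ν * (s : ℂ) * (Real.cos θ : ℂ)

def flux (S : ℝ → ℂ) (θ : ℝ) : ℂ := (Real.sin θ : ℂ) * deriv S θ * conj (S θ)

def fluxDeriv (s m : ℝ) (ν lam : ℂ) (S : ℝ → ℂ) (θ : ℝ) : ℂ :=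
  ((‖deriv S θ‖ ^ 2 * Real.sin θ : ℝ) : ℂ)
    + (((m + s * Real.cos θ) ^ 2 * ‖S θ‖ ^ 2 / Real.sin θ : ℝ) : ℂ)
    + (-ν ^ 2 * (Real.cos θ : ℂ) ^ 2 + 2 * ν * s * Real.cos θ - lam)
      * ((‖S θ‖ ^ 2 * Real.sin θ : ℝ) : ℂ)

def energyDensity (s m : ℝ) (ν : ℂ) (S : ℝ → ℂ) (θ : ℝ) : ℝ :=
  ‖deriv S θ‖ ^ 2 * Real.sin θ + (m + s * Real.cos θ) ^ 2 * ‖S θ‖ ^ 2 / Real.sin θ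
    + ‖ν‖ ^ 2 * (Real.cos θ ^ 2 * (‖S θ‖ ^ 2 * Real.sin θ))

theorem deriv_sin_mul_deriv (hODE : AngularTeukolskyODE s m ν lam S) {θ : ℝ}
    (hθ : θ ∈ Ioo 0 π) :
    deriv (fun x : ℝ => (Real.sin x : ℂ) * deriv S x) θ
      = Real.sin θ * (potential s m ν θ - lam) * S θ := by
  have h := hODE θ hθ.1 hθ.2
  have hsin : (Real.sin θ : ℂ) ≠ 0 := ofReal_ne_zero.2 (sin_pos_of_pos_of_lt_pi hθ.1 hθ.2).ne'
  field_simp at h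
  unfold potential
  linear_combination -h

theorem hasDerivAt_flux (hODE : AngularTeukolskyODE s m ν lam S)
    (hS : ContDiffOn ℝ 2 S (Ioo 0 π)) {θ : ℝ} (hθ : θ ∈ Ioo 0 π) :
    HasDerivAt (flux S) (fluxDeriv s m ν lam S θ) θ := by
  have hnhds : Ioo 0 π ∈ 𝓝 θ := isOpen_Ioo.mem_nhds hθ
  have hS' : HasDerivAt S (deriv S θ) θ :=
    ((hS.differentiableOn (by norm_num)) θ hθ).differentiableAt hnhds |>.hasDerivAt
  have hS'' : HasDerivAt (deriv S) (deriv (deriv S) θ) θ :=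
    (((hS.deriv_of_isOpen (m := 1) isOpen_Ioo (by norm_num)).differentiableOn one_ne_zero) θ hθ
      |>.differentiableAt hnhds).hasDerivAt
  have hG : HasDerivAt (fun x : ℝ => (Real.sin x : ℂ) * deriv S x)
      (Real.sin θ * (potential s m ν θ - lam) * S θ) θ := by
    rw [← hODE.deriv_sin_mul_deriv hθ]
    exact ((Real.hasDerivAt_sin θ).ofReal_comp.mul hS'').differentiableAt.hasDerivAt
  have hconj : HasDerivAt (fun x => conj (S x)) (conj (deriv S θ)) θ := hS'.star
  refine (hG.mul hconj).congr_deriv ?_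
  have hsin : (Real.sin θ : ℂ) ≠ 0 := ofReal_ne_zero.2 (sin_pos_of_pos_of_lt_pi hθ.1 hθ.2).ne'
  simp only [fluxDeriv, potential, mul_assoc, mul_conj', ofReal_mul, ofReal_div, ofReal_pow,
    ofReal_add]
  field_simp
  ring

theorem integrableOn_fluxDeriv
    (hL2 : IntegrableOn (fun θ : ℝ => ‖S θ‖ ^ 2 * Real.sin θ) (Ioo 0 π))
    (hL2' : IntegrableOn (fun θ : ℝ => ‖deriv S θ‖ ^ 2 * Real.sin θ) (Ioo 0 π))
    (hpot : IntegrableOn (fun θ : ℝ => (m + s * Real.cos θ) ^ 2 * ‖S θ‖ ^ 2 / Real.sin θ)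
      (Ioo 0 π)) :
    IntegrableOn (fluxDeriv s m ν lam S) (Ioo 0 π) := by
  have hcoef : ContinuousOn
      (fun θ : ℝ => -ν ^ 2 * (Real.cos θ : ℂ) ^ 2 + 2 * ν * s * Real.cos θ - lam) (Icc 0 π) := by
    fun_prop
  exact (hL2'.ofReal.add hpot.ofReal).add (hcoef.integrableOn_Ioo_mul hL2.ofReal)

theorem integrableOn_energyDensity
    (hL2 : IntegrableOn (fun θ : ℝ => ‖S θ‖ ^ 2 * Real.sin θ) (Ioo 0 π))
    (hL2' : IntegrableOn (fun θ : ℝ => ‖deriv S θ‖ ^ 2 * Real.sin θ) (Ioo 0 π))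
    (hpot : IntegrableOn (fun θ : ℝ => (m + s * Real.cos θ) ^ 2 * ‖S θ‖ ^ 2 / Real.sin θ)
      (Ioo 0 π)) :
    IntegrableOn (energyDensity s m ν S) (Ioo 0 π) :=
  (hL2'.add hpot).add <|
    ((Real.continuousOn_cos.pow 2).integrableOn_Ioo_mul hL2).const_mul _

theorem im_conj_mul_fluxDeriv (θ : ℝ) :
    (conj ν * fluxDeriv s m ν lam S θ).im
      = -(ν.im * energyDensity s m ν S θ + (conj ν * lam).im * (‖S θ‖ ^ 2 * Real.sin θ)) := by
  rw [fluxDeriv, energyDensity, Complex.sq_norm ν, normSq_apply]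
  generalize ‖deriv S θ‖ ^ 2 * Real.sin θ = a
  generalize (m + s * Real.cos θ) ^ 2 * ‖S θ‖ ^ 2 / Real.sin θ = b
  generalize ‖S θ‖ ^ 2 * Real.sin θ = e
  generalize Real.cos θ = c
  simp only [mul_im, mul_re, add_im, add_re, sub_im, sub_re, neg_im, neg_re, conj_re, conj_im,
    ofReal_re, ofReal_im, pow_two, re_ofNat, im_ofNat]
  ring

theorem continuousOn_energyDensity (hS : ContDiffOn ℝ 1 S (Ioo 0 π)) :
    ContinuousOn (energyDensity s m ν S) (Ioo 0 π) := by
  have hS' : ContinuousOn (deriv S) (Ioo 0 π) :=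
    hS.continuousOn_deriv_of_isOpen isOpen_Ioo le_rfl
  have hsin : ∀ θ ∈ Ioo 0 π, Real.sin θ ≠ 0 := fun θ hθ => (sin_pos_of_pos_of_lt_pi hθ.1 hθ.2).ne'
  have hS0 := hS.continuousOn
  unfold energyDensity
  fun_prop (disch := exact hsin)

theorem energyDensity_nonneg {θ : ℝ} (hθ : θ ∈ Ioo 0 π) : 0 ≤ energyDensity s m ν S θ := by
  have := sin_pos_of_pos_of_lt_pi hθ.1 hθ.2
  unfold energyDensity
  positivity

theorem integral_energyDensity_pos (hν : ν ≠ 0) (hS : ContDiffOn ℝ 1 S (Ioo 0 π))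
    (hne : ∃ θ ∈ Ioo 0 π, S θ ≠ 0) (hint : IntegrableOn (energyDensity s m ν S) (Ioo 0 π)) :
    0 < ∫ θ in Ioo 0 π, energyDensity s m ν S θ := by
  obtain ⟨θ, hθ, hSθ, hcos⟩ := exists_mem_Ioo_ne_zero_and_cos_ne_zero hS.continuousOn hne
  refine setIntegral_pos_of_continuousOn isOpen_Ioo (continuousOn_energyDensity hS) hint
    (fun _ => energyDensity_nonneg) hθ (ne_of_gt ?_)
  have hsin := sin_pos_of_pos_of_lt_pi hθ.1 hθ.2
  unfold energyDensity
  positivity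

theorem energy_identity (hODE : AngularTeukolskyODE s m ν lam S)
    (hS : ContDiffOn ℝ 2 S (Ioo 0 π))
    (hL2 : IntegrableOn (fun θ : ℝ => ‖S θ‖ ^ 2 * Real.sin θ) (Ioo 0 π))
    (hL2' : IntegrableOn (fun θ : ℝ => ‖deriv S θ‖ ^ 2 * Real.sin θ) (Ioo 0 π))
    (hpot : IntegrableOn (fun θ : ℝ => (m + s * Real.cos θ) ^ 2 * ‖S θ‖ ^ 2 / Real.sin θ)
      (Ioo 0 π))
    (hb0 : Tendsto (flux S) (𝓝[>] 0) (𝓝 0)) (hbπ : Tendsto (flux S) (𝓝[<] π) (𝓝 0)) :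
    ν.im * (∫ θ in Ioo 0 π, energyDensity s m ν S θ)
      + (conj ν * lam).im * ∫ θ in Ioo 0 π, ‖S θ‖ ^ 2 * Real.sin θ = 0 := by
  have hflux : IntegrableOn (fluxDeriv s m ν lam S) (Ioo 0 π) :=
    integrableOn_fluxDeriv hL2 hL2' hpot
  have hzero : ∫ θ in Ioo 0 π, fluxDeriv s m ν lam S θ = 0 := by
    rw [integral_Ioo_eq_sub_of_hasDerivAt_of_tendsto pi_pos
      (fun _ => hODE.hasDerivAt_flux hS) hflux hb0 hbπ, sub_zero]
  have hIm : ∫ θ in Ioo 0 π, (conj ν * fluxDeriv s m ν lam S θ).im = 0 := by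
    have := integral_im (𝕜 := ℂ) (hflux.const_mul (conj ν))
    rw [integral_const_mul, hzero, mul_zero] at this
    simpa using this
  have hE := (integrableOn_energyDensity (ν := ν) hL2 hL2' hpot).const_mul ν.im
  calc ν.im * (∫ θ in Ioo 0 π, energyDensity s m ν S θ)
        + (conj ν * lam).im * ∫ θ in Ioo 0 π, ‖S θ‖ ^ 2 * Real.sin θ
      = ∫ θ in Ioo 0 π, (ν.im * energyDensity s m ν S θ
          + (conj ν * lam).im * (‖S θ‖ ^ 2 * Real.sin θ)) := by
        rw [integral_add hE (hL2.const_mul _), integral_const_mul, integral_const_mul]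
    _ = -∫ θ in Ioo 0 π, (conj ν * fluxDeriv s m ν lam S θ).im := by
        rw [← integral_neg]
        simp only [im_conj_mul_fluxDeriv, neg_neg]
    _ = 0 := by rw [hIm, neg_zero]

end AngularTeukolskyODE

/-- **Angular eigenvalue estimate in the upper half-plane** (Proposition 2.1, 1(b)):
if `Im ν > 0` and `S` is a nontrivial twice continuously differentiable solution of the
angular Teukolsky ODE on `(0, π)` with finite weighted `L²`, derivative and potential
integrals and vanishing boundary flux, then `Im(conj(ν)·λ) < 0`. -/
theorem angular_eigenvalue_upper_half_plane
    (s m : ℝ) (ν lam : ℂ) (hν : 0 < ν.im)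
    (S : ℝ → ℂ) (hS : ContDiffOn ℝ 2 S (Set.Ioo 0 π))
    (hODE : AngularTeukolskyODE s m ν lam S)
    (hne : ∃ θ ∈ Set.Ioo (0 : ℝ) π, S θ ≠ 0)
    (hL2 : IntegrableOn (fun θ : ℝ => ‖S θ‖ ^ 2 * Real.sin θ) (Set.Ioo 0 π))
    (hL2' : IntegrableOn (fun θ : ℝ => ‖deriv S θ‖ ^ 2 * Real.sin θ)
      (Set.Ioo 0 π))
    (hpot : IntegrableOn
      (fun θ : ℝ => (m + s * Real.cos θ) ^ 2 * ‖S θ‖ ^ 2 / Real.sin θ)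
      (Set.Ioo 0 π))
    (hb0 : Tendsto (fun θ : ℝ => (Real.sin θ : ℂ) * deriv S θ * (starRingEnd ℂ) (S θ))
      (nhdsWithin 0 (Set.Ioi 0)) (nhds 0))
    (hbπ : Tendsto (fun θ : ℝ => (Real.sin θ : ℂ) * deriv S θ * (starRingEnd ℂ) (S θ))
      (nhdsWithin π (Set.Iio π)) (nhds 0)) :
    ((starRingEnd ℂ) ν * lam).im < 0 := by
  have hν0 : ν ≠ 0 := fun h => hν.ne' (by simp [h])
  have hE : 0 < ∫ θ in Ioo 0 π, AngularTeukolskyODE.energyDensity s m ν S θ :=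
    AngularTeukolskyODE.integral_energyDensity_pos hν0 (hS.of_le one_le_two) hne
      (AngularTeukolskyODE.integrableOn_energyDensity hL2 hL2' hpot)
  have hB : 0 ≤ ∫ θ in Ioo 0 π, ‖S θ‖ ^ 2 * Real.sin θ :=
    setIntegral_nonneg measurableSet_Ioo fun θ hθ =>
      mul_nonneg (sq_nonneg _) (sin_pos_of_pos_of_lt_pi hθ.1 hθ.2).le
  have key := hODE.energy_identity hS hL2 hL2' hpot hb0 hbπ
  by_contra! h
  nlinarith [mul_pos hν hE, mul_nonneg h hB]
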